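/- arXiv:1912.04638 — 2 statements merged into one kernel-verified Lean document; each statement's English description precedes it below -/
import Mathlib

section
/- For the function f of the counterexample, the steepness s = max over x ∈ U with f({x}) < f(∅) of [(f(∅) − f({x})) − (f(U∖{x}) − f(U))] / (f(∅) − f({x})) equals 1/2. -/
open Finset

/-- The ground set U = {1,2,3,4}. -/
def U : Finset ℕ := {1, 2, 3, 4}

/-- The explicit set function of the counterexample. -/
def f (S : Finset ℕ) : ℝ :=
  if S = (∅ : Finset ℕ) then 6
  else if S = ({1} : Finset ℕ) then 4
  else if S = ({2} : Finset ℕ) then 5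
  else if S = ({3} : Finset ℕ) then 4
  else if S = ({4} : Finset ℕ) then 4
  else if S = ({3, 4} : Finset ℕ) then 2
  else if S = ({1, 2} : Finset ℕ) then 3
  else if S = ({2, 4} : Finset ℕ) then 3
  else if S = ({2, 3} : Finset ℕ) then 3
  else if S = ({1, 4} : Finset ℕ) then 2
  else if S = ({1, 3} : Finset ℕ) then 2
  else if S = ({1, 2, 3} : Finset ℕ) then 1
  else if S = ({2, 3, 4} : Finset ℕ) then 1
  else if S = ({1, 3, 4} : Finset ℕ) then 1
  else if S = ({1, 2, 4} : Finset ℕ) then 1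
  else 0

/-- The marginal increment when removing x from X. -/
def d (x : ℕ) (X : Finset ℕ) : ℝ := f (X \ {x}) - f X

/-- The dependence family of the comatroid. -/
def D : Finset (Finset ℕ) :=
  {U, {2, 3, 4}, {1, 3, 4}, {1, 2, 4}, {1, 2, 3}, {1, 2}, {1, 4}, {2, 3}, {3, 4}}

/-- The circuits of the comatroid. -/
def C : Finset (Finset ℕ) := {{1, 2}, {1, 4}, {2, 3}, {3, 4}}

theorem steepness_eq_half :
    IsGreatest
      {r : ℝ | ∃ x ∈ U, f {x} < f ∅ ∧
        r = ((f ∅ - f {x}) - (f (U \ {x}) - f U)) / (f ∅ - f {x})}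
      (1 / 2) := by
  have h1 : (U : Finset ℕ) \ {1} = {2,3,4} := by decide
  have h2 : (U : Finset ℕ) \ {2} = {1,3,4} := by decide
  have h3 : (U : Finset ℕ) \ {3} = {1,2,4} := by decide
  have h4 : (U : Finset ℕ) \ {4} = {1,2,3} := by decide
  constructor
  · exact ⟨1, by decide, by norm_num [f],
      by rw [h1]; simp (config := { decide := true }) [f]; norm_num⟩
  · rintro r ⟨x, hx, hlt, rfl⟩
    fin_cases hx <;>
      simp only [h1, h2, h3, h4] <;>
        simp (config := { decide := true }) [f] <;> norm_num
end

section
/- For the counterexample instance there exists a feasible set X ∈ C (namely X = {1,2}) such that f(X) / min_{Y∈C} f(Y) > (1/t)((1 + t/q)^q − 1) where t = s/(1−s), s = 1/2, q = 2; i.e., the claimed greedy performance guarantee of Il'ev (2006, Theorem 1) fails for this instance. -/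
open Finset

noncomputable def s : ℝ := 1 / 2
noncomputable def t : ℝ := s / (1 - s)
def q : ℕ := 2

theorem guarantee_fails :
    ∃ X ∈ C,
      (∀ Y ∈ C, f {3, 4} ≤ f Y) ∧
      f X / f {3, 4} > (1 / t) * ((1 + t / (q : ℝ)) ^ q - 1) := by
  refine ⟨{1, 2}, by decide, ?_, ?_⟩
  · intro Y hY
    fin_cases hY <;> simp (config := { decide := true }) only [f] <;> norm_num
  · have : t = 1 := by norm_num [t, s]
    rw [this]
    simp (config := { decide := true }) only [f, q]
    norm_num
end
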